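/- arXiv:0708.3123 — 4 statements merged into one kernel-verified Lean document; each statement's English description precedes it below -/
import Mathlib

section
/- Let k be a natural number, and let z > 0 and s > 1/2 + k be real numbers. Then ∫₀^∞ e^{−t z²} t^{s−1} (∫₀^∞ x^{2k} e^{−t x²} dx) dt = (√π · C_k / 2) · z^{1 + 2k − 2s} · Γ(s − 1/2 − k), where Γ is the Gamma function, C_0 = 1 and C_k = ∏_{m=0}^{k−1}(m + 1/2) for k ≥ 1. -/
/-!
Both integrals are Gamma integrals. The substitution `u = t x²` gives
`p_k(t) = Γ(k + 1/2) / 2 · t^{-(k + 1/2)}`, so the Laplace–Mellin transform of `p_k` is that of a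
power of `t`, namely `Γ(k + 1/2) / 2 · Γ(s - k - 1/2) · (z²)^{k + 1/2 - s}`; finally
`Γ(k + 1/2) = √π · C_k` by the functional equation and `Γ(1/2) = √π`.
-/

open MeasureTheory Real Finset

lemma Real.Gamma_nat_add_half_eq_sqrt_pi_mul_prod (k : ℕ) :
    Gamma (k + 1 / 2) = √π * ∏ m ∈ range k, ((m : ℝ) + 1 / 2) := by
  induction k with
  | zero => simpa using Gamma_one_half_eq
  | succ n ih =>
    rw [prod_range_succ, Nat.cast_succ, add_right_comm, Gamma_add_one (by positivity), ih]
    ring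

lemma integral_pow_two_mul_mul_exp_neg_mul_sq (k : ℕ) {t : ℝ} (ht : 0 < t) :
    ∫ x in Set.Ioi (0 : ℝ), x ^ (2 * k) * exp (-(t * x ^ 2))
      = Gamma (k + 1 / 2) / 2 * t ^ (-(k + 1 / 2 : ℝ)) := by
  have hk : (-1 : ℝ) < 2 * k := by linarith [(Nat.cast_nonneg k : (0 : ℝ) ≤ k)]
  calc ∫ x in Set.Ioi (0 : ℝ), x ^ (2 * k) * exp (-(t * x ^ 2))
      = ∫ x in Set.Ioi (0 : ℝ), x ^ (2 * k : ℝ) * exp (-t * x ^ (2 : ℝ)) := by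
        refine setIntegral_congr_fun measurableSet_Ioi fun x _ => ?_
        norm_cast
        ring_nf
    _ = t ^ (-(2 * k + 1 : ℝ) / 2) * (1 / 2) * Gamma ((2 * k + 1) / 2) :=
        integral_rpow_mul_exp_neg_mul_rpow two_pos hk ht
    _ = Gamma (k + 1 / 2) / 2 * t ^ (-(k + 1 / 2 : ℝ)) := by ring_nf

lemma integral_exp_neg_mul_sq_mul_rpow_mul_rpow_neg {a s z : ℝ} (hz : 0 < z) (has : a < s) :
    ∫ t in Set.Ioi (0 : ℝ), exp (-(t * z ^ 2)) * t ^ (s - 1) * t ^ (-a)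
      = z ^ (2 * (a - s)) * Gamma (s - a) := by
  calc ∫ t in Set.Ioi (0 : ℝ), exp (-(t * z ^ 2)) * t ^ (s - 1) * t ^ (-a)
      = ∫ t in Set.Ioi (0 : ℝ), t ^ (s - a - 1) * exp (-(z ^ 2 * t)) := by
        refine setIntegral_congr_fun measurableSet_Ioi fun t ht => ?_
        rw [sub_right_comm, sub_eq_add_neg (s - 1) a, rpow_add ht, mul_comm t]
        ring
    _ = (1 / z ^ 2) ^ (s - a) * Gamma (s - a) :=
        integral_rpow_mul_exp_neg_mul_Ioi (sub_pos.2 has) (by positivity)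
    _ = z ^ (2 * (a - s)) * Gamma (s - a) := by
        rw [one_div, ← rpow_natCast, ← rpow_neg_one, ← rpow_mul hz.le, ← rpow_mul hz.le]
        congr 2
        ring

/-- Lemma 2.2: for a natural number `k` and real `z > 0`, `s > 1/2 + k`,
the Laplace–Mellin transform of `p_k(t) = ∫₀^∞ x^{2k} e^{−t x²} dx` is
`(√π · C_k / 2) · z^{1 + 2k − 2s} · Γ(s − 1/2 − k)`, where `C_0 = 1` and
`C_k = ∏_{m=0}^{k−1}(m + 1/2)` for `k ≥ 1`. -/
theorem laplace_mellin_gaussian_moment (k : ℕ) (z s : ℝ)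
    (hz : 0 < z) (hs : 1 / 2 + k < s) :
    ∫ t in Set.Ioi (0 : ℝ),
        Real.exp (-(t * z ^ 2)) * t ^ (s - 1)
          * (∫ x in Set.Ioi (0 : ℝ), x ^ (2 * k) * Real.exp (-(t * x ^ 2)))
      = (Real.sqrt π * (∏ m ∈ Finset.range k, ((m : ℝ) + 1 / 2)) / 2)
          * z ^ (1 + 2 * (k : ℝ) - 2 * s) * Real.Gamma (s - 1 / 2 - k) := by
  calc _ = ∫ t in Set.Ioi (0 : ℝ), Gamma (k + 1 / 2) / 2
          * (exp (-(t * z ^ 2)) * t ^ (s - 1) * t ^ (-(k + 1 / 2 : ℝ))) := by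
        refine setIntegral_congr_fun measurableSet_Ioi fun t ht => ?_
        rw [integral_pow_two_mul_mul_exp_neg_mul_sq k ht]
        ring
    _ = Gamma (k + 1 / 2) / 2 * (z ^ (2 * (k + 1 / 2 - s)) * Gamma (s - (k + 1 / 2))) := by
        rw [integral_const_mul, integral_exp_neg_mul_sq_mul_rpow_mul_rpow_neg hz (by linarith)]
    _ = _ := by
        rw [Gamma_nat_add_half_eq_sqrt_pi_mul_prod]
        ring_nf
end

section
/- Let V be a real number and let z > 0 and s > 3/2 be real numbers. Then ∫₀^∞ e^{−t z²} t^{s−1} · 2V · (∫_{−∞}^∞ e^{−t x²}(x² + 1) dx) dt = √π · V · ( z^{3 − 2s} · Γ(s − 3/2) + 2 · z^{1 − 2s} · Γ(s − 1/2) ), where Γ is the Gamma function. -/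
/-!
For fixed `t > 0` the inner integral is a combination of the Gaussian moments
`∫ |x|^q e^{-t x²} dx = t^{-(q+1)/2} Γ((q+1)/2)` with `q = 2` and `q = 0`, namely
`√π (t^{-3/2}/2 + t^{-1/2})`. The outer integral therefore splits into two Gamma integrals
`∫₀^∞ e^{-t z²} t^{a-1} dt = z^{-2a} Γ(a)`, with `a = s - 3/2` and `a = s - 1/2`.
-/

open MeasureTheory Real Set

theorem integral_abs_rpow_mul_exp_neg_mul_sq {q b : ℝ} (hq : -1 < q) (hb : 0 < b) :
    ∫ x : ℝ, |x| ^ q * exp (-b * x ^ 2) = b ^ (-(q + 1) / 2) * Gamma ((q + 1) / 2) := by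
  have hIoi := integral_rpow_mul_exp_neg_mul_rpow two_pos hq hb
  simp only [rpow_two] at hIoi
  calc ∫ x : ℝ, |x| ^ q * exp (-b * x ^ 2) = 2 * ∫ x in Ioi 0, x ^ q * exp (-b * x ^ 2) := by
        simpa only [sq_abs] using
          integral_comp_abs (f := fun x => x ^ q * exp (-b * x ^ (2 : ℕ)))
    _ = _ := by rw [hIoi]; ring

theorem integrable_abs_rpow_mul_exp_neg_mul_sq {q b : ℝ} (hq : -1 < q) (hb : 0 < b) :
    Integrable fun x : ℝ => |x| ^ q * exp (-b * x ^ 2) :=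
  -- a non-integrable function has Bochner integral `0`
  Integrable.of_integral_ne_zero <| by
    rw [integral_abs_rpow_mul_exp_neg_mul_sq hq hb]
    have : 0 < (q + 1) / 2 := by linarith
    positivity

theorem integral_exp_neg_mul_sq_mul_sq_add_one {b : ℝ} (hb : 0 < b) :
    ∫ x : ℝ, exp (-(b * x ^ 2)) * (x ^ 2 + 1) =
      √π * (b ^ (-(3 / 2) : ℝ) / 2 + b ^ (-(1 / 2) : ℝ)) := by
  have hsplit : (fun x : ℝ => exp (-(b * x ^ 2)) * (x ^ 2 + 1))
      = fun x => |x| ^ (2 : ℝ) * exp (-b * x ^ 2) + |x| ^ (0 : ℝ) * exp (-b * x ^ 2) := by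
    ext x
    rw [rpow_two, sq_abs, rpow_zero, neg_mul]
    ring
  have hGamma : Gamma (3 / 2) = √π / 2 := by
    rw [show (3 / 2 : ℝ) = 1 / 2 + 1 by norm_num, Gamma_add_one (by norm_num), Gamma_one_half_eq]
    ring
  rw [hsplit, integral_add (integrable_abs_rpow_mul_exp_neg_mul_sq (by norm_num) hb)
    (integrable_abs_rpow_mul_exp_neg_mul_sq (by norm_num) hb),
    integral_abs_rpow_mul_exp_neg_mul_sq (by norm_num) hb,
    integral_abs_rpow_mul_exp_neg_mul_sq (by norm_num) hb]
  norm_num [hGamma, Gamma_one_half_eq]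
  ring

theorem integral_exp_neg_mul_sq_mul_rpow_sub_one_Ioi {s z : ℝ} (hs : 0 < s) (hz : 0 < z) :
    ∫ t in Ioi 0, exp (-(t * z ^ 2)) * t ^ (s - 1) = z ^ (-(2 * s)) * Gamma s := by
  have h := integral_rpow_mul_exp_neg_mul_Ioi hs (pow_pos hz 2)
  have hpow : (1 / z ^ 2) ^ s = z ^ (-(2 * s)) := by
    rw [one_div, inv_rpow (by positivity), ← rpow_natCast, ← rpow_mul hz.le, rpow_neg hz.le]
    norm_num
  simp only [mul_comm (z ^ 2), mul_comm (_ ^ (s - 1))] at h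
  rw [h, hpow]

theorem integrableOn_exp_neg_mul_sq_mul_rpow_sub_one {s z : ℝ} (hs : 0 < s) (hz : 0 < z) :
    IntegrableOn (fun t => exp (-(t * z ^ 2)) * t ^ (s - 1)) (Ioi 0) :=
  Integrable.of_integral_ne_zero <| by
    rw [integral_exp_neg_mul_sq_mul_rpow_sub_one_Ioi hs hz]
    positivity

/-- Laplace–Mellin transform of the 1-form identity term
`I_1(t) = 2V ∫_{−∞}^∞ e^{−tx²}(x²+1) dx`: for real `V`, `z > 0` and `s > 3/2`,
`∫₀^∞ e^{−t z²} t^{s−1} · 2V · (∫_{−∞}^∞ e^{−t x²}(x²+1) dx) dt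
  = √π·V·(z^{3−2s}·Γ(s−3/2) + 2·z^{1−2s}·Γ(s−1/2))`. -/
theorem laplace_mellin_identity_term_one_forms (V z s : ℝ) (hz : 0 < z) (hs : 3 / 2 < s) :
    ∫ t in Set.Ioi (0 : ℝ),
        Real.exp (-(t * z ^ 2)) * t ^ (s - 1) * (2 * V)
          * (∫ x : ℝ, Real.exp (-(t * x ^ 2)) * (x ^ 2 + 1))
      = Real.sqrt π * V * (z ^ (3 - 2 * s) * Real.Gamma (s - 3 / 2)
          + 2 * z ^ (1 - 2 * s) * Real.Gamma (s - 1 / 2)) := by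
  have hs₃ : 0 < s - 3 / 2 := by linarith
  have hs₁ : 0 < s - 1 / 2 := by linarith
  have hsplit : ∀ t ∈ Ioi (0 : ℝ), exp (-(t * z ^ 2)) * t ^ (s - 1) * (2 * V)
        * (∫ x : ℝ, exp (-(t * x ^ 2)) * (x ^ 2 + 1))
      = √π * V * (exp (-(t * z ^ 2)) * t ^ (s - 3 / 2 - 1))
        + 2 * √π * V * (exp (-(t * z ^ 2)) * t ^ (s - 1 / 2 - 1)) := by
    intro t (ht : 0 < t)
    rw [integral_exp_neg_mul_sq_mul_sq_add_one ht, show s - 3 / 2 - 1 = s - 1 + -(3 / 2) by ring,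
      show s - 1 / 2 - 1 = s - 1 + -(1 / 2) by ring, rpow_add ht, rpow_add ht]
    ring
  rw [setIntegral_congr_fun measurableSet_Ioi hsplit,
    integral_add ((integrableOn_exp_neg_mul_sq_mul_rpow_sub_one hs₃ hz).const_mul _)
      ((integrableOn_exp_neg_mul_sq_mul_rpow_sub_one hs₁ hz).const_mul _),
    integral_const_mul, integral_const_mul, integral_exp_neg_mul_sq_mul_rpow_sub_one_Ioi hs₃ hz,
    integral_exp_neg_mul_sq_mul_rpow_sub_one_Ioi hs₁ hz,
    show -(2 * (s - 3 / 2)) = 3 - 2 * s by ring, show -(2 * (s - 1 / 2)) = 1 - 2 * s by ring]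
  ring
end

section
/- Let ι be a countable index type, let l : ι → ℝ satisfy l(i) > 0 for all i, let a : ι → ℂ, and let z > 0 be a real number. Assume the family i ↦ |a(i)| · e^{−(z+1)·l(i)} / l(i) is summable. Then the integral ∫₀^∞ e^{−t z²} · ( ∑_i a(i) · (4πt)^{−1/2} · e^{−l(i)²/(4t) − l(i)} ) · t^{−1} dt converges absolutely and equals ∑_i (a(i)/l(i)) · e^{−(z+1)·l(i)}. -/
/-!
Each term is the classical Laplace transform of the heat kernel,
`∫₀^∞ e^{-t z²} (4πt)^{-1/2} e^{-l²/(4t)} dt / t = e^{-z l} / l`.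
The substitution `t = l² / (4u²)` turns it into `∫₀^∞ e^{-(u² + c²/u²)} du = (√π / 2) e^{-2c}`
with `c = z l / 2`, which follows from the Gaussian integral through the substitution
`y = u - c/u`, combined with the symmetry `u ↦ c/u` of the integrand.
The integrals of the norms of the terms are the summands of the hypothesis, so the series can be
integrated term by term.
-/

open MeasureTheory Real

open Set

section ChangeOfVariables

variable {E : Type*} [NormedAddCommGroup E] [NormedSpace ℝ E] {c : ℝ}

lemma hasDerivAt_const_div {x : ℝ} (hx : x ≠ 0) : HasDerivAt (fun x => c / x) (-(c / x ^ 2)) x := by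
  simpa [div_eq_mul_inv, neg_div] using (hasDerivAt_inv hx).const_mul c

lemma strictAntiOn_const_div (hc : 0 < c) : StrictAntiOn (fun x => c / x) (Ioi 0) :=
  fun _ hx _ _ hxy => div_lt_div_of_pos_left hc hx hxy

lemma image_const_div_Ioi (hc : 0 < c) : (fun x => c / x) '' Ioi 0 = Ioi 0 := by
  refine Subset.antisymm (image_subset_iff.2 fun x hx => div_pos hc hx) fun y hy => ?_
  exact ⟨c / y, div_pos hc hy, div_div_cancel₀ hc.ne'⟩

lemma integrableOn_Ioi_comp_const_div_iff (hc : 0 < c) (g : ℝ → E) :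
    IntegrableOn (fun x => (c / x ^ 2) • g (c / x)) (Ioi 0) ↔ IntegrableOn g (Ioi 0) := by
  have h := integrableOn_image_iff_integrableOn_abs_deriv_smul measurableSet_Ioi
    (fun x hx => (hasDerivAt_const_div (c := c) (ne_of_gt hx)).hasDerivWithinAt)
    (strictAntiOn_const_div hc).injOn g
  rw [image_const_div_Ioi hc] at h
  rw [h]
  exact integrableOn_congr_fun (fun x _ => by rw [abs_neg, abs_of_nonneg (by positivity)])
    measurableSet_Ioi

lemma integral_Ioi_comp_const_div (hc : 0 < c) (g : ℝ → E) :
    ∫ x in Ioi 0, (c / x ^ 2) • g (c / x) = ∫ x in Ioi 0, g x := by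
  have h := integral_image_eq_integral_abs_deriv_smul measurableSet_Ioi
    (fun x hx => (hasDerivAt_const_div (c := c) (ne_of_gt hx)).hasDerivWithinAt)
    (strictAntiOn_const_div hc).injOn g
  rw [image_const_div_Ioi hc] at h
  rw [h]
  exact setIntegral_congr_fun measurableSet_Ioi fun x _ => by
    rw [abs_neg, abs_of_nonneg (by positivity)]

lemma hasDerivAt_sub_const_div {x : ℝ} (hx : x ≠ 0) :
    HasDerivAt (fun x => x - c / x) (1 + c / x ^ 2) x := by
  simpa only [sub_neg_eq_add] using (hasDerivAt_id' x).fun_sub (hasDerivAt_const_div (c := c) hx)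

lemma strictMonoOn_sub_const_div (hc : 0 < c) : StrictMonoOn (fun x => x - c / x) (Ioi 0) :=
  fun _ hx _ hy hxy => sub_lt_sub hxy (strictAntiOn_const_div hc hx hy hxy)

lemma image_sub_const_div_Ioi (hc : 0 < c) : (fun x => x - c / x) '' Ioi 0 = univ := by
  refine eq_univ_of_forall fun y => ?_
  set s := √(y ^ 2 + 4 * c)
  have hs : s ^ 2 = y ^ 2 + 4 * c := sq_sqrt (by positivity)
  have hys : |y| < s := by
    rw [← sqrt_sq_eq_abs]
    exact sqrt_lt_sqrt (sq_nonneg y) (by linarith)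
  have hx : 0 < (y + s) / 2 := by linarith [neg_abs_le y]
  refine ⟨(y + s) / 2, hx, ?_⟩
  have : c / ((y + s) / 2) = (s - y) / 2 := by
    rw [div_eq_iff hx.ne']
    linear_combination -hs / 4
  simp only [this]
  ring

lemma integral_Ioi_comp_sub_const_div (hc : 0 < c) (g : ℝ → E) :
    ∫ x in Ioi 0, (1 + c / x ^ 2) • g (x - c / x) = ∫ y, g y := by
  have h := integral_image_eq_integral_abs_deriv_smul measurableSet_Ioi
    (fun x hx => (hasDerivAt_sub_const_div (c := c) (ne_of_gt hx)).hasDerivWithinAt)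
    (strictMonoOn_sub_const_div hc).injOn g
  rw [image_sub_const_div_Ioi hc, setIntegral_univ] at h
  rw [h]
  refine setIntegral_congr_fun measurableSet_Ioi fun x _ => ?_
  rw [abs_of_pos (by positivity)]

end ChangeOfVariables

lemma integrableOn_exp_neg_sq_add_div_sq (c : ℝ) :
    IntegrableOn (fun x => exp (-(x ^ 2 + c ^ 2 / x ^ 2))) (Ioi 0) := by
  refine ((integrable_exp_neg_mul_sq one_pos).integrableOn).mono' (by fun_prop) ?_
  filter_upwards with x
  rw [norm_of_nonneg (exp_nonneg _)]
  have : 0 ≤ c ^ 2 / x ^ 2 := by positivity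
  exact exp_le_exp.2 (by linarith)

lemma integral_exp_neg_sq_add_div_sq {c : ℝ} (hc : 0 < c) :
    ∫ x in Ioi 0, exp (-(x ^ 2 + c ^ 2 / x ^ 2)) = √π / 2 * exp (-(2 * c)) := by
  set P : ℝ → ℝ := fun x => exp (-(x ^ 2 + c ^ 2 / x ^ 2))
  have hP_inv : ∀ x ∈ Ioi (0 : ℝ), (c / x ^ 2) • P (c / x) = c / x ^ 2 * P x := by
    intro x hx
    have : x ≠ 0 := ne_of_gt hx
    simp only [P, smul_eq_mul]
    congr 3
    field_simp
    ring
  have hQ : IntegrableOn (fun x => c / x ^ 2 * P x) (Ioi 0) :=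
    ((integrableOn_Ioi_comp_const_div_iff hc P).2 (integrableOn_exp_neg_sq_add_div_sq c)).congr_fun
      hP_inv measurableSet_Ioi
  have hQ_eq : ∫ x in Ioi 0, c / x ^ 2 * P x = ∫ x in Ioi 0, P x := by
    rw [← setIntegral_congr_fun measurableSet_Ioi hP_inv, integral_Ioi_comp_const_div hc]
  have hshift : ∀ x ∈ Ioi (0 : ℝ), (1 + c / x ^ 2) • exp (-(x - c / x) ^ 2)
      = exp (2 * c) * (P x + c / x ^ 2 * P x) := by
    intro x hx
    have : x ≠ 0 := ne_of_gt hx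
    simp only [P, smul_eq_mul]
    rw [show -(x - c / x) ^ 2 = 2 * c + -(x ^ 2 + c ^ 2 / x ^ 2) by field_simp; ring, exp_add]
    ring
  have key : √π = exp (2 * c) * (2 * ∫ x in Ioi 0, P x) := by
    calc √π = ∫ y, exp (-y ^ 2) := by simpa using (integral_gaussian 1).symm
      _ = ∫ x in Ioi 0, exp (2 * c) * (P x + c / x ^ 2 * P x) := by
        rw [← integral_Ioi_comp_sub_const_div hc, setIntegral_congr_fun measurableSet_Ioi hshift]
      _ = exp (2 * c) * (2 * ∫ x in Ioi 0, P x) := by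
        rw [integral_const_mul, integral_add (integrableOn_exp_neg_sq_add_div_sq c) hQ, hQ_eq]
        ring
  rw [exp_neg, eq_mul_inv_iff_mul_eq₀ (exp_pos _).ne']
  linear_combination -key / 2

noncomputable def heatKernel (l t : ℝ) : ℝ := (4 * π * t) ^ (-(1 : ℝ) / 2) * exp (-(l ^ 2 / (4 * t)))

lemma heatKernel_nonneg (l : ℝ) {t : ℝ} (ht : 0 ≤ t) : 0 ≤ heatKernel l t :=
  mul_nonneg (rpow_nonneg (by positivity) _) (exp_nonneg _)

lemma integral_exp_neg_mul_heatKernel_div {l z : ℝ} (hl : 0 < l) (hz : 0 < z) :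
    ∫ t in Ioi 0, exp (-(t * z ^ 2)) * heatKernel l t * t⁻¹ = exp (-(z * l)) / l := by
  set g : ℝ → ℝ := fun t => exp (-(t * z ^ 2)) * heatKernel l t * t⁻¹
  have hc : 0 < l ^ 2 / 4 := by positivity
  have hsubst : ∀ u ∈ Ioi (0 : ℝ), (2 * u ^ ((2 : ℝ) - 1)) •
      ((l ^ 2 / 4 / (u ^ (2 : ℝ)) ^ 2) • g (l ^ 2 / 4 / u ^ (2 : ℝ)))
        = 2 / (√π * l) * exp (-(u ^ 2 + (z * l / 2) ^ 2 / u ^ 2)) := by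
    intro u hu
    have hu : 0 < u := hu
    have hroot : (4 * π * (l ^ 2 / 4 / u ^ 2)) ^ (-(1 : ℝ) / 2) = u / (√π * l) := by
      have : 4 * π * (l ^ 2 / 4 / u ^ 2) = (√π * l / u) ^ 2 := by
        rw [div_pow, mul_pow, sq_sqrt pi_pos.le]
        ring
      rw [this, neg_div, rpow_neg (sq_nonneg _), ← sqrt_eq_rpow, sqrt_sq (by positivity), inv_div]
    have hexp : exp (-(l ^ 2 / 4 / u ^ 2 * z ^ 2)) * exp (-(l ^ 2 / (4 * (l ^ 2 / 4 / u ^ 2))))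
        = exp (-(u ^ 2 + (z * l / 2) ^ 2 / u ^ 2)) := by
      rw [← exp_add]
      congr 1
      field_simp
      ring
    simp only [g, heatKernel, smul_eq_mul, rpow_two, (by norm_num : (2 : ℝ) - 1 = 1), rpow_one]
    rw [hroot, ← hexp]
    field_simp
  calc ∫ t in Ioi 0, g t
      = ∫ x in Ioi 0, (l ^ 2 / 4 / x ^ 2) • g (l ^ 2 / 4 / x) :=
        (integral_Ioi_comp_const_div hc g).symm
    _ = ∫ u in Ioi 0, (2 * u ^ ((2 : ℝ) - 1)) •
          ((l ^ 2 / 4 / (u ^ (2 : ℝ)) ^ 2) • g (l ^ 2 / 4 / u ^ (2 : ℝ))) :=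
        (integral_comp_rpow_Ioi_of_pos two_pos).symm
    _ = ∫ u in Ioi 0, 2 / (√π * l) * exp (-(u ^ 2 + (z * l / 2) ^ 2 / u ^ 2)) :=
        setIntegral_congr_fun measurableSet_Ioi hsubst
    _ = exp (-(z * l)) / l := by
      rw [integral_const_mul, integral_exp_neg_sq_add_div_sq (by positivity)]
      field_simp

lemma integrableOn_exp_neg_mul_heatKernel_div {l z : ℝ} (hl : 0 < l) (hz : 0 < z) :
    IntegrableOn (fun t => exp (-(t * z ^ 2)) * heatKernel l t * t⁻¹) (Ioi 0) :=
  -- a non-integrable function would have integral `0`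
  Integrable.of_integral_ne_zero (by rw [integral_exp_neg_mul_heatKernel_div hl hz]; positivity)

section SeriesOfIntegrable

variable {α E ι : Type*} [MeasurableSpace α] {μ : Measure α} [NormedAddCommGroup E] [Countable ι]

lemma integrable_tsum_of_summable_integral_norm [CompleteSpace E] {F : ι → α → E}
    (hF_int : ∀ i, Integrable (F i) μ) (hF_sum : Summable fun i ↦ ∫ a, ‖F i a‖ ∂μ) :
    Integrable (fun a ↦ ∑' i, F i a) μ := by
  have hlint : ∑' i, ∫⁻ a, ‖F i a‖ₑ ∂μ ≠ ⊤ := by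
    simp_rw [← ofReal_integral_norm_eq_lintegral_enorm (hF_int _)]
    rw [← ENNReal.ofReal_tsum_of_nonneg (fun i => integral_nonneg fun _ => norm_nonneg _) hF_sum]
    exact ENNReal.ofReal_ne_top
  have hsummable : ∀ᵐ a ∂μ, Summable fun i => ‖F i a‖ :=
    summable_norm_of_tsum_eLpNorm_ne_top le_rfl (fun i => (hF_int i).1)
      (by simpa only [eLpNorm_one_eq_lintegral_enorm] using hlint)
  refine ⟨aestronglyMeasurable_of_tendsto_ae (Filter.atTop : Filter (Finset ι))
    (fun s => s.aestronglyMeasurable_fun_sum fun i _ => (hF_int i).1) ?_, ?_⟩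
  · filter_upwards [hsummable] with a ha using ha.of_norm.hasSum
  · calc ∫⁻ a, ‖∑' i, F i a‖ₑ ∂μ ≤ ∫⁻ a, ∑' i, ‖F i a‖ₑ ∂μ :=
          lintegral_mono fun _ => enorm_tsum_le_tsum_enorm
      _ = ∑' i, ∫⁻ a, ‖F i a‖ₑ ∂μ := lintegral_tsum fun i => (hF_int i).1.enorm
      _ < ⊤ := hlint.lt_top

lemma integral_norm_mul_ofReal {f : α → ℝ} (hf : 0 ≤ᵐ[μ] f) (c : ℂ) :
    ∫ a, ‖c * (f a : ℂ)‖ ∂μ = ‖c‖ * ∫ a, f a ∂μ := by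
  simp_rw [norm_mul, Complex.norm_real]
  rw [integral_const_mul]
  congr 1
  exact integral_congr_ae (hf.mono fun a ha => norm_of_nonneg ha)

end SeriesOfIntegrable

/-- Lemma 3.1 (analytic content): term-by-term Laplace transform of the hyperbolic term.
Given countably many closed geodesics with lengths `l i > 0` and coefficients `a i`,
and `z > 0`, if `i ↦ |a i|·e^{−(z+1)·l i}/l i` is summable, then
`∫₀^∞ e^{−t z²} (∑_i a i·(4πt)^{−1/2}·e^{−l i²/(4t) − l i}) t⁻¹ dt` converges absolutely
and equals `∑_i (a i / l i)·e^{−(z+1)·l i}`. -/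
theorem laplace_transform_hyperbolic_term {ι : Type*} [Countable ι]
    (l : ι → ℝ) (hl : ∀ i, 0 < l i) (a : ι → ℂ) (z : ℝ) (hz : 0 < z)
    (hsum : Summable fun i => ‖a i‖ * Real.exp (-((z + 1) * l i)) / l i) :
    IntegrableOn
      (fun t : ℝ => (Real.exp (-(t * z ^ 2)) : ℂ)
        * (∑' i, a i * (((4 * π * t) ^ (-(1 : ℝ) / 2)
            * Real.exp (-((l i) ^ 2 / (4 * t)) - l i) : ℝ) : ℂ))
        * (t : ℂ)⁻¹) (Set.Ioi 0) ∧
    ∫ t in Set.Ioi (0 : ℝ),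
        (Real.exp (-(t * z ^ 2)) : ℂ)
          * (∑' i, a i * (((4 * π * t) ^ (-(1 : ℝ) / 2)
              * Real.exp (-((l i) ^ 2 / (4 * t)) - l i) : ℝ) : ℂ))
          * (t : ℂ)⁻¹
      = ∑' i, (a i / (l i : ℂ)) * ((Real.exp (-((z + 1) * l i)) : ℝ) : ℂ) := by
  set K : ι → ℝ → ℝ := fun i t => exp (-l i) * (exp (-(t * z ^ 2)) * heatKernel (l i) t * t⁻¹)
  have hK i : ∫ t in Ioi 0, K i t = exp (-((z + 1) * l i)) / l i := by
    rw [integral_const_mul, integral_exp_neg_mul_heatKernel_div (hl i) hz, mul_div_assoc',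
      ← exp_add]
    ring_nf
  have hK_nonneg i : 0 ≤ᵐ[volume.restrict (Ioi 0)] K i := by
    refine ae_restrict_of_forall_mem measurableSet_Ioi fun t (ht : 0 < t) => ?_
    have := heatKernel_nonneg (l i) ht.le
    positivity
  have hF : ∀ t : ℝ, (exp (-(t * z ^ 2)) : ℂ) * (∑' i, a i * (((4 * π * t) ^ (-(1 : ℝ) / 2)
      * exp (-((l i) ^ 2 / (4 * t)) - l i) : ℝ) : ℂ)) * (t : ℂ)⁻¹ = ∑' i, a i * (K i t : ℂ) := by
    intro t
    rw [← tsum_mul_left, ← tsum_mul_right]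
    refine tsum_congr fun i => ?_
    simp only [K, heatKernel, sub_eq_add_neg, exp_add]
    push_cast
    ring
  have hF_int i : Integrable (fun t => a i * (K i t : ℂ)) (volume.restrict (Ioi 0)) :=
    ((integrableOn_exp_neg_mul_heatKernel_div (hl i) hz).const_mul _).ofReal.const_mul (a i)
  have hF_sum : Summable fun i => ∫ t in Ioi 0, ‖a i * (K i t : ℂ)‖ := by
    simpa only [integral_norm_mul_ofReal (hK_nonneg _), hK, mul_div_assoc] using hsum
  simp_rw [hF]
  refine ⟨integrable_tsum_of_summable_integral_norm hF_int hF_sum, ?_⟩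
  rw [← integral_tsum_of_summable_integral_norm hF_int hF_sum]
  refine tsum_congr fun i => ?_
  rw [integral_const_mul, integral_complex_ofReal, hK]
  push_cast
  ring
end

section
/- Let A > 0, α > 0 and C ≥ 0 be real numbers, and let h : ℝ → ℂ be measurable on (0, A] with ‖h(t)‖ ≤ C·e^{−α/t} for all t ∈ (0, A]. Then the function s ↦ ∫₀^A t^{s−1} h(t) dt (with t^{s−1} = exp((s−1)·log t) for t > 0) is well defined and entire, i.e., complex-differentiable at every s ∈ ℂ. -/
/-!
Extending `h` by zero outside `(0, A]` gives a function whose Mellin transform is exactly the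
truncated integral. It vanishes near `+∞`, and near `0` the bound `e^{-α/t}` beats every power
`t^b`, so its Mellin transform converges and is holomorphic on every vertical strip, hence on `ℂ`.
-/

open MeasureTheory Real Set Filter Asymptotics
open scoped Topology

theorem isLittleO_exp_neg_div_rpow_nhdsGT_zero {α : ℝ} (hα : 0 < α) (b : ℝ) :
    (fun t : ℝ => exp (-α / t)) =o[𝓝[>] 0] (· ^ b) := by
  refine ((isLittleO_exp_neg_mul_rpow_atTop hα (-b)).comp_tendsto tendsto_inv_nhdsGT_zero).congr'
    (.of_forall fun t => ?_) (eventually_mem_nhdsWithin.mono fun t ht => ?_)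
  · simp [div_eq_mul_inv]
  · simp [inv_rpow (le_of_lt ht), rpow_neg (le_of_lt ht)]

theorem isBigO_rpow_nhdsGT_zero_of_norm_le_exp_neg_div {E : Type*} [NormedAddCommGroup E]
    {f : ℝ → E} {A α C : ℝ} (hA : 0 < A) (hα : 0 < α)
    (hf : ∀ t ∈ Ioc 0 A, ‖f t‖ ≤ C * exp (-α / t)) (b : ℝ) :
    f =O[𝓝[>] 0] (· ^ b) := by
  refine .trans (.of_bound C (Eventually.mono (Ioc_mem_nhdsGT hA) fun t ht => ?_))
    (isLittleO_exp_neg_div_rpow_nhdsGT_zero hα b).isBigO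
  rw [norm_of_nonneg (exp_pos _).le]
  exact hf t ht

theorem isBigO_atTop_indicator_Ioc {E F : Type*} [NormedAddCommGroup E] [Norm F]
    (a b : ℝ) (f : ℝ → E) (g : ℝ → F) : (Ioc a b).indicator f =O[atTop] g :=
  (isBigO_zero g atTop).congr'
    ((eventually_gt_atTop b).mono fun _ ht => (indicator_of_notMem (fun h => ht.not_ge h.2) f).symm)
    EventuallyEq.rfl

section MellinIndicator

variable {E : Type*} [NormedAddCommGroup E] [NormedSpace ℂ E] {T : Set ℝ}

theorem mellinConvergent_indicator_iff (hT : T ⊆ Ioi 0) (hTm : MeasurableSet T) (f : ℝ → E)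
    (s : ℂ) :
    MellinConvergent (T.indicator f) s ↔
      IntegrableOn (fun t : ℝ => (t : ℂ) ^ (s - 1) • f t) T := by
  simp_rw [MellinConvergent, ← indicator_smul]
  rw [integrableOn_indicator_iff hTm, inter_eq_left.2 hT]

theorem mellin_indicator (hT : T ⊆ Ioi 0) (hTm : MeasurableSet T) (f : ℝ → E) (s : ℂ) :
    mellin (T.indicator f) s = ∫ t in T, (t : ℂ) ^ (s - 1) • f t := by
  simp_rw [mellin, ← indicator_smul]
  rw [setIntegral_indicator hTm, inter_eq_right.2 hT]

end MellinIndicator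

/-- Small-time part of Lemma 4.1: if `h` is measurable on `(0, A]` and
`‖h(t)‖ ≤ C·e^{−α/t}` there (with `A > 0`, `α > 0`, `C ≥ 0`), then
`s ↦ ∫₀^A t^{s−1} h(t) dt` is well defined and entire in `s`. -/
theorem truncated_mellin_entire (A α C : ℝ) (hA : 0 < A) (hα : 0 < α) (hC : 0 ≤ C)
    (h : ℝ → ℂ)
    (hmeas : AEStronglyMeasurable h (volume.restrict (Set.Ioc 0 A)))
    (hbound : ∀ t ∈ Set.Ioc (0 : ℝ) A, ‖h t‖ ≤ C * Real.exp (-α / t)) :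
    (∀ s : ℂ, IntegrableOn (fun t : ℝ => (t : ℂ) ^ (s - 1) * h t) (Set.Ioc 0 A)) ∧
    (∀ s : ℂ, DifferentiableAt ℂ
      (fun s : ℂ => ∫ t in Set.Ioc (0 : ℝ) A, (t : ℂ) ^ (s - 1) * h t) s) := by
  set g := (Ioc 0 A).indicator h
  have hIoc : Ioc 0 A ⊆ Ioi 0 := Ioc_subset_Ioi_self
  have h_bdd : ∀ t ∈ Ioc 0 A, ‖h t‖ ≤ C := fun t ht => (hbound t ht).trans <|
    mul_le_of_le_one_right hC <| exp_le_one_iff.2 <|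
      div_nonpos_of_nonpos_of_nonneg (neg_nonpos.2 hα.le) ht.1.le
  have hg_int : LocallyIntegrableOn g (Ioi 0) :=
    ((integrable_indicator_iff measurableSet_Ioc).2 <| IntegrableOn.of_bound measure_Ioc_lt_top
      hmeas C (ae_restrict_of_forall_mem measurableSet_Ioc h_bdd)).integrableOn.locallyIntegrableOn
  have hg_top (a : ℝ) : g =O[atTop] (· ^ (-a)) := isBigO_atTop_indicator_Ioc 0 A h _
  have hg_bot (b : ℝ) : g =O[𝓝[>] 0] (· ^ (-b)) :=
    isBigO_rpow_nhdsGT_zero_of_norm_le_exp_neg_div hA hα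
      (fun t ht => by rw [show g t = h t from indicator_of_mem ht h]; exact hbound t ht) _
  refine ⟨fun s => ?_, fun s => ?_⟩
  · exact (mellinConvergent_indicator_iff hIoc measurableSet_Ioc h s).1 <|
      mellinConvergent_of_isBigO_rpow hg_int (hg_top _) (lt_add_one s.re) (hg_bot _)
        (sub_one_lt s.re)
  · have := mellin_differentiableAt_of_isBigO_rpow hg_int (hg_top _) (lt_add_one s.re) (hg_bot _)
      (sub_one_lt s.re)
    rwa [funext (mellin_indicator hIoc measurableSet_Ioc h)] at this
end
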